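/- arXiv:2508.18511 — 2 statements merged into one kernel-verified Lean document; each statement's English description precedes it below -/
import Mathlib

section
/- Let (N,n) be a bad pair. Suppose that (a) gcd(N, 2n+1) > 1; (b) gcd(N, 3n+1) = 1 and gcd(N, 3n+2) > 1; (c) gcd(N, 4n+3) = 1. Then R_{N,n} = D_{(3n+1)/(3N)} ∪ D_{(4n+3)/(4N)}. In particular, c(N,n) = 0. -/
/-!
Write a candidate as `α = (k n + j)/(k N)` with `0 ≤ j ≤ k` and `gcd(k n + j, k N) = 1`. The map
`z ↦ N z - n` carries `D_α` onto `D_{j/k}` and the two target disks onto `D_{1/3}` and `D_{3/4}`, so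
everything happens over `[0, 1]`. There `D_{j/k} ⊆ D_{1/3}` as soon as `|3j - k| ≤ k - 3` and
`D_{j/k} ⊆ D_{3/4}` as soon as `|4j - 3k| ≤ k - 4`, and the only `0 < j < k` escaping both are
`j/k = 1/2, 2/3, 2/4, 3/5, 4/7`. The gcd hypotheses exclude `j = 0`, `j = k`, `1/2`, `2/3`, `2/4`
(`N` would share a factor with the numerator), while `D_{3/5}` and `D_{4/7}` are covered by the two
disks together, cut by the line `re z = 3/5`. So only `(3n+1)/(3N)` and `(4n+3)/(4N)` can be in
`S_{N,n}`, and neither north pole lies in the other disk.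
-/

namespace Paper

noncomputable section

/-- Closed disk attached to a rational `α = a/b` in lowest terms:
center `α`, radius `1/b`. -/
def disk (α : ℚ) : Set ℂ := Metric.closedBall (α : ℂ) (1 / (α.den : ℝ))

/-- The closed disk `D_{a/b}` of radius `1/b` centered at `a/b`. -/
def diskAt (a b : ℕ) : Set ℂ := Metric.closedBall ((a : ℂ) / (b : ℂ)) (1 / (b : ℝ))

/-- The north pole `P_α = a/b + i/b` of the disk of `α = a/b` in lowest terms. -/
def northPole (α : ℚ) : ℂ := (α : ℂ) + Complex.I / (α.den : ℂ)

/-- Complexity of the north pole of `α` relative to a set `S` of rationals: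
the number of `β ∈ S`, `β ≠ α`, whose disk contains `P_α`. -/
def poleComplexity (S : Set ℚ) (α : ℚ) : ℕ :=
  {β ∈ S | β ≠ α ∧ northPole α ∈ disk β}.ncard

/-- Rationals `a/b ∈ [n/N, (n+1)/N]` in lowest terms with `N ∣ b`. -/
def candB (N n : ℕ) : Set ℚ :=
  {α | (n : ℚ) / (N : ℚ) ≤ α ∧ α ≤ ((n : ℚ) + 1) / (N : ℚ) ∧ N ∣ α.den}

/-- The region `R_{N,n}` for a bad pair `(N,n)`. -/
def RB (N n : ℕ) : Set ℂ := ⋃ α ∈ candB N n, disk α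

/-- The set `S_{N,n}` for a bad pair `(N,n)`. -/
def SB (N n : ℕ) : Set ℚ :=
  {α | α ∈ candB N n ∧ ¬ disk α ⊆ ⋃ β ∈ candB N n \ {α}, disk β}

/-- The complexity `c(N,n)` for a bad pair `(N,n)`. -/
def cB (N n : ℕ) : ℕ := sSup (poleComplexity (SB N n) '' SB N n)

open Complex Metric

lemma mem_closedBall_ofReal_iff {c r : ℝ} (hr : 0 ≤ r) (z : ℂ) :
    z ∈ closedBall (c : ℂ) r ↔ (z.re - c) ^ 2 + z.im ^ 2 ≤ r ^ 2 := by
  rw [mem_closedBall, dist_eq_re_im, Real.sqrt_le_left hr]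
  simp

lemma diskAt_eq_closedBall (a b : ℕ) :
    diskAt a b = closedBall ((a / b : ℝ) : ℂ) (1 / b) := by
  simp [diskAt]

lemma diskAt_subset_diskAt {a b c d : ℕ} (hd : 0 < d)
    (h : |(a : ℤ) * d - c * b| ≤ b - d) : diskAt a b ⊆ diskAt c d := by
  have hb : 0 < b := by have := abs_nonneg ((a : ℤ) * d - c * b); omega
  rw [diskAt_eq_closedBall, diskAt_eq_closedBall]
  apply closedBall_subset_closedBall'
  have hb' : (0 : ℝ) < b := by exact_mod_cast hb
  have hd' : (0 : ℝ) < d := by exact_mod_cast hd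
  have h' : |(a : ℝ) * d - c * b| ≤ b - d := by exact_mod_cast h
  have key : (a / b - c / d : ℝ) = (a * d - c * b) / (b * d) := by field_simp
  have : (b - d) / (b * d) = (1 / d - 1 / b : ℝ) := by field_simp
  rw [dist_of_im_eq (by simp), ofReal_re, ofReal_re, Real.dist_eq, key, abs_div,
    abs_of_pos (mul_pos hb' hd')]
  linarith [div_le_div_of_nonneg_right h' (mul_pos hb' hd').le]

/-- Based on `|z - c₁|² = |z - c|² + (c - c₁)(2 re z - c - c₁)`: `h₁` puts the part of the disk
left of the line `re z = x₀` into the first disk, `h₂` the part right of it into the second. -/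
lemma closedBall_subset_union_of_chord {c c₁ c₂ r r₁ r₂ : ℝ} (x₀ : ℝ) (hr₁ : 0 ≤ r₁) (hr₂ : 0 ≤ r₂)
    (hc₁ : c₁ ≤ c) (hc₂ : c ≤ c₂)
    (h₁ : (c - c₁) * (2 * x₀ - c - c₁) ≤ r₁ ^ 2 - r ^ 2)
    (h₂ : (c - c₂) * (2 * x₀ - c - c₂) ≤ r₂ ^ 2 - r ^ 2) :
    closedBall (c : ℂ) r ⊆ closedBall (c₁ : ℂ) r₁ ∪ closedBall (c₂ : ℂ) r₂ := by
  intro z hz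
  have hr : 0 ≤ r := nonempty_closedBall.mp ⟨z, hz⟩
  rw [mem_closedBall_ofReal_iff hr] at hz
  rcases le_total z.re x₀ with h | h
  · left
    rw [mem_closedBall_ofReal_iff hr₁]
    nlinarith [mul_nonneg (sub_nonneg.mpr hc₁) (sub_nonneg.mpr h)]
  · right
    rw [mem_closedBall_ofReal_iff hr₂]
    nlinarith [mul_nonneg (sub_nonneg.mpr hc₂) (sub_nonneg.mpr h)]

lemma diskAt_three_five_subset : diskAt 3 5 ⊆ diskAt 1 3 ∪ diskAt 3 4 := by
  simp only [diskAt_eq_closedBall]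
  apply closedBall_subset_union_of_chord (3 / 5) <;> norm_num

lemma diskAt_four_seven_subset : diskAt 4 7 ⊆ diskAt 1 3 ∪ diskAt 3 4 := by
  simp only [diskAt_eq_closedBall]
  apply closedBall_subset_union_of_chord (3 / 5) <;> norm_num

lemma diskAt_subset_union {j k : ℕ} (hj : 0 < j) (hjk : j < k) (h₂ : ¬(j = 1 ∧ k = 2))
    (h₃ : ¬(j = 2 ∧ k = 3)) (h₄ : ¬(j = 2 ∧ k = 4)) :
    diskAt j k ⊆ diskAt 1 3 ∪ diskAt 3 4 := by
  rcases (by omega : (3 * j + 3 ≤ 2 * k) ∨ (k + 2 ≤ 2 * j) ∨ (j = 3 ∧ k = 5) ∨ (j = 4 ∧ k = 7))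
    with h | h | ⟨rfl, rfl⟩ | ⟨rfl, rfl⟩
  · refine (diskAt_subset_diskAt (by norm_num) ?_).trans Set.subset_union_left
    exact abs_le.mpr ⟨by push_cast; omega, by push_cast; omega⟩
  · refine (diskAt_subset_diskAt (by norm_num) ?_).trans Set.subset_union_right
    exact abs_le.mpr ⟨by push_cast; omega, by push_cast; omega⟩
  · exact diskAt_three_five_subset
  · exact diskAt_four_seven_subset

lemma diskAt_mul_add_eq_preimage {N k : ℕ} (hN : 0 < N) (hk : 0 < k) (n j : ℕ) :
    diskAt (k * n + j) (k * N) = (fun z : ℂ => N * z - n) ⁻¹' diskAt j k := by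
  have hN' : (0 : ℝ) < N := by exact_mod_cast hN
  have hk' : (0 : ℝ) < k := by exact_mod_cast hk
  have hNc : (N : ℂ) ≠ 0 := by exact_mod_cast hN.ne'
  have hkc : (k : ℂ) ≠ 0 := by exact_mod_cast hk.ne'
  ext z
  have key : (N * z - n - j / k : ℂ) = N * (z - ((k * n + j : ℕ) : ℂ) / ((k * N : ℕ) : ℂ)) := by
    push_cast
    field_simp
    ring
  simp only [diskAt, Set.mem_preimage, mem_closedBall, dist_eq_norm, key, norm_mul,
    Complex.norm_natCast]
  rw [← le_div_iff₀' hN', div_div]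
  push_cast
  ring_nf

lemma den_natCast_div_natCast {a b : ℕ} (hb : 0 < b) (h : a.Coprime b) :
    ((a : ℚ) / b).den = b := by
  have := Rat.den_div_eq_of_coprime (a := a) (b := b) (by exact_mod_cast hb) (by simpa using h)
  simp only [Int.cast_natCast] at this
  exact_mod_cast this

lemma disk_natCast_div_natCast {a b : ℕ} (hb : 0 < b) (h : a.Coprime b) :
    disk ((a : ℚ) / b) = diskAt a b := by
  rw [disk, den_natCast_div_natCast hb h, diskAt]
  push_cast
  rfl

lemma mem_candB_iff {N n : ℕ} (hN : 0 < N) {α : ℚ} :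
    α ∈ candB N n ↔ ∃ k j : ℕ, 0 < k ∧ j ≤ k ∧ (k * n + j).Coprime (k * N) ∧
      α = ((k * n + j : ℕ) : ℚ) / ((k * N : ℕ) : ℚ) := by
  have hNq : (0 : ℚ) < N := by exact_mod_cast hN
  constructor
  · rintro ⟨hlo, hhi, k, hk⟩
    have hnum : (α.num : ℚ) = α * (k * N) := by rw [← Rat.mul_den_eq_num, hk]; push_cast; ring
    have hlo' : ((k * n : ℕ) : ℤ) ≤ α.num := by
      have : (k * n : ℚ) ≤ α * (k * N) := by
        rw [div_le_iff₀ hNq] at hlo; nlinarith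
      exact_mod_cast hnum ▸ this
    have hhi' : α.num ≤ ((k * n + k : ℕ) : ℤ) := by
      have : α * (k * N) ≤ (k * n + k : ℚ) := by
        rw [le_div_iff₀ hNq] at hhi; nlinarith
      exact_mod_cast hnum ▸ this
    obtain ⟨p, hp⟩ := Int.eq_ofNat_of_zero_le ((Int.natCast_nonneg _).trans hlo')
    rw [hp] at hlo' hhi'
    have hjp : k * n + (p - k * n) = p := by omega
    refine ⟨k, p - k * n, Nat.pos_of_ne_zero ?_, by omega, ?_, ?_⟩
    · rintro rfl
      simp at hk
    · have := α.reduced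
      rw [hp, hk, mul_comm] at this
      simpa [hjp] using this
    · rw [hjp, ← Rat.num_div_den α, hp, hk, mul_comm]
      push_cast
      rfl
  · rintro ⟨k, j, hk, hjk, hcop, rfl⟩
    have hkq : (0 : ℚ) < k := by exact_mod_cast hk
    have hjq : (j : ℚ) ≤ k := by exact_mod_cast hjk
    refine ⟨?_, ?_, ?_⟩
    · rw [div_le_div_iff₀ hNq (by positivity)]; push_cast; nlinarith
    · rw [div_le_div_iff₀ (by positivity) hNq]; push_cast; nlinarith
    · rw [den_natCast_div_natCast (by positivity) hcop]; exact dvd_mul_left N k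

lemma disk_subset_union_of_mem_candB {N n : ℕ} (hN : 0 < N) (hg : 1 < N.gcd n)
    (hbad : 1 < N.gcd (n + 1)) (h2 : 1 < N.gcd (2 * n + 1)) (h32 : 1 < N.gcd (3 * n + 2))
    {α : ℚ} (hα : α ∈ candB N n) :
    disk α ⊆ diskAt (3 * n + 1) (3 * N) ∪ diskAt (4 * n + 3) (4 * N) := by
  obtain ⟨k, j, hk, hjk, hcop, rfl⟩ := (mem_candB_iff hN).mp hα
  -- a common factor of `N` and the numerator would divide the reduced denominator `k N`
  have hgcd : ∀ c m, k * n + j = c * m → N.gcd c = 1 := fun c m h =>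
    ((Nat.Coprime.coprime_mul_right (h ▸ hcop)).coprime_dvd_right (dvd_mul_left N k)).symm
  rw [disk_natCast_div_natCast (by positivity) hcop, diskAt_mul_add_eq_preimage hN hk,
    diskAt_mul_add_eq_preimage hN (k := 3) (by norm_num),
    diskAt_mul_add_eq_preimage hN (k := 4) (by norm_num), ← Set.preimage_union]
  refine Set.preimage_mono (diskAt_subset_union ?_ ?_ ?_ ?_ ?_)
  · refine Nat.pos_of_ne_zero fun hj => ?_
    have := hgcd n k (by rw [hj]; ring)
    omega
  · refine lt_of_le_of_ne hjk fun hj => ?_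
    have := hgcd (n + 1) k (by rw [hj]; ring)
    omega
  · rintro ⟨rfl, rfl⟩
    have := hgcd (2 * n + 1) 1 (by ring)
    omega
  · rintro ⟨rfl, rfl⟩
    have := hgcd (3 * n + 2) 1 (by ring)
    omega
  · rintro ⟨rfl, rfl⟩
    have := hgcd (2 * n + 1) 2 (by ring)
    omega

lemma northPole_mem_diskAt_iff {N n k j k' j' : ℕ} (hN : 0 < N) (hk : 0 < k) (hk' : 0 < k')
    (hcop : (k * n + j).Coprime (k * N)) :
    northPole (((k * n + j : ℕ) : ℚ) / ((k * N : ℕ) : ℚ)) ∈ diskAt (k' * n + j') (k' * N) ↔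
      (j / k + I / k : ℂ) ∈ diskAt j' k' := by
  have hNc : (N : ℂ) ≠ 0 := by exact_mod_cast hN.ne'
  have hkc : (k : ℂ) ≠ 0 := by exact_mod_cast hk.ne'
  rw [diskAt_mul_add_eq_preimage hN hk', Set.mem_preimage, northPole,
    den_natCast_div_natCast (by positivity) hcop]
  convert Iff.rfl using 2
  push_cast
  field_simp
  ring

lemma RB_eq_union {N n : ℕ} {α₁ α₂ : ℚ} (h₁ : α₁ ∈ candB N n) (h₂ : α₂ ∈ candB N n)
    (hcover : ∀ α ∈ candB N n, disk α ⊆ disk α₁ ∪ disk α₂) : RB N n = disk α₁ ∪ disk α₂ :=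
  (Set.iUnion₂_subset hcover).antisymm
    (Set.union_subset (Set.subset_biUnion_of_mem h₁) (Set.subset_biUnion_of_mem h₂))

lemma SB_subset_pair {N n : ℕ} {α₁ α₂ : ℚ} (h₁ : α₁ ∈ candB N n) (h₂ : α₂ ∈ candB N n)
    (hcover : ∀ α ∈ candB N n, disk α ⊆ disk α₁ ∪ disk α₂) : SB N n ⊆ {α₁, α₂} := by
  rintro γ ⟨hγ, hγS⟩
  by_contra hne
  simp only [Set.mem_insert_iff, Set.mem_singleton_iff, not_or] at hne
  exact hγS ((hcover γ hγ).trans (Set.union_subset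
    (Set.subset_biUnion_of_mem (u := disk) ⟨h₁, fun h => hne.1 h.symm⟩)
    (Set.subset_biUnion_of_mem (u := disk) ⟨h₂, fun h => hne.2 h.symm⟩)))

lemma cB_eq_zero_of_subset_pair {N n : ℕ} {α₁ α₂ : ℚ} (hS : SB N n ⊆ {α₁, α₂})
    (h₁₂ : northPole α₁ ∉ disk α₂) (h₂₁ : northPole α₂ ∉ disk α₁) : cB N n = 0 := by
  have hpc : ∀ α ∈ SB N n, poleComplexity (SB N n) α = 0 := by
    intro α hα
    have hempty : {β ∈ SB N n | β ≠ α ∧ northPole α ∈ disk β} = ∅ := by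
      refine Set.eq_empty_of_forall_notMem ?_
      rintro β ⟨hβ, hne, hmem⟩
      rcases hS hα with rfl | rfl <;> rcases hS hβ with rfl | rfl
      exacts [hne rfl, h₁₂ hmem, h₂₁ hmem, hne rfl]
    rw [poleComplexity, hempty, Set.ncard_empty]
  exact Nat.le_zero.mp (csSup_le' (by rintro _ ⟨α, hα, rfl⟩; exact (hpc α hα).le))

lemma one_third_add_I_third_notMem_diskAt :
    (((1 : ℕ) : ℂ) / ((3 : ℕ) : ℂ) + I / ((3 : ℕ) : ℂ)) ∉ diskAt 3 4 := by
  rw [diskAt_eq_closedBall, mem_closedBall_ofReal_iff (by norm_num)]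
  norm_num

lemma three_quarters_add_I_quarter_notMem_diskAt :
    (((3 : ℕ) : ℂ) / ((4 : ℕ) : ℂ) + I / ((4 : ℕ) : ℂ)) ∉ diskAt 1 3 := by
  rw [diskAt_eq_closedBall, mem_closedBall_ofReal_iff (by norm_num)]
  norm_num

theorem bad_region_four_points_one_general (N n : ℕ) (hN : 1 < N)
    (hg : 1 < Nat.gcd N n) (hbad : 1 < Nat.gcd N (n + 1))
    (h2 : 1 < Nat.gcd N (2 * n + 1))
    (h31 : Nat.gcd N (3 * n + 1) = 1) (h32 : 1 < Nat.gcd N (3 * n + 2))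
    (h43 : Nat.gcd N (4 * n + 3) = 1) :
    RB N n = diskAt (3 * n + 1) (3 * N) ∪ diskAt (4 * n + 3) (4 * N) ∧ cB N n = 0 := by
  have hN0 : 0 < N := by omega
  have hcop₁ : (3 * n + 1).Coprime (3 * N) :=
    Nat.Coprime.mul_right (by simp) (Nat.Coprime.symm h31)
  have hcop₂ : (4 * n + 3).Coprime (4 * N) :=
    Nat.Coprime.mul_right (by simp; decide) (Nat.Coprime.symm h43)
  have hmem₁ := (mem_candB_iff hN0 (n := n)).mpr ⟨3, 1, by norm_num, by norm_num, hcop₁, rfl⟩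
  have hmem₂ := (mem_candB_iff hN0 (n := n)).mpr ⟨4, 3, by norm_num, by norm_num, hcop₂, rfl⟩
  have hdisk₁ := disk_natCast_div_natCast (by positivity) hcop₁
  have hdisk₂ := disk_natCast_div_natCast (by positivity) hcop₂
  have hcover : ∀ α ∈ candB N n, disk α ⊆ disk _ ∪ disk _ := fun α hα =>
    hdisk₁ ▸ hdisk₂ ▸ disk_subset_union_of_mem_candB hN0 hg hbad h2 h32 hα
  refine ⟨hdisk₁ ▸ hdisk₂ ▸ RB_eq_union hmem₁ hmem₂ hcover,
    cB_eq_zero_of_subset_pair (SB_subset_pair hmem₁ hmem₂ hcover) ?_ ?_⟩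
  · rw [hdisk₂, northPole_mem_diskAt_iff hN0 (by norm_num) (by norm_num) hcop₁]
    exact one_third_add_I_third_notMem_diskAt
  · rw [hdisk₁, northPole_mem_diskAt_iff hN0 (by norm_num) (by norm_num) hcop₂]
    exact three_quarters_add_I_quarter_notMem_diskAt

/-- For a bad pair `(N,n)` with `gcd(N,2n+1) > 1`, `gcd(N,3n+1) = 1`,
`gcd(N,3n+2) > 1` and `gcd(N,4n+3) = 1`, the region `R_{N,n}` is the union of
the two disks `D_{(3n+1)/(3N)}` and `D_{(4n+3)/(4N)}`. In particular `c(N,n) = 0`. -/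
theorem bad_region_four_points_one (N n : ℕ) (hN : 1 < N) (hn : n ≤ N - 1)
    (hg : 1 < Nat.gcd N n) (hbad : 1 < Nat.gcd N (n + 1))
    (h2 : 1 < Nat.gcd N (2 * n + 1))
    (h31 : Nat.gcd N (3 * n + 1) = 1) (h32 : 1 < Nat.gcd N (3 * n + 2))
    (h43 : Nat.gcd N (4 * n + 3) = 1) :
    RB N n = diskAt (3 * n + 1) (3 * N) ∪ diskAt (4 * n + 3) (4 * N) ∧ cB N n = 0 :=
  bad_region_four_points_one_general N n hN hg hbad h2 h31 h32 h43

end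

end Paper
end

section
/- Let N>1 be an integer. If for every integer n with 0 ≤ n ≤ N−1 at least two of the five integers n, n+1, 2n+1, 3n+1, 3n+2 are coprime to N, then c(N) = 0. -/
/-!
Write the denominators of elements of `S_N` as `N m`. If the north pole of `α = a/(N m)` lies in
the disk of `β = b/(N j)`, clearing denominators gives `(a j - b m)² + j² ≤ m²` with
`a j - b m ≠ 0`, so `j < m` and `|a j - b m| < m`. On the other hand, writing `a = m c + s` with
`0 < s < m`, the disk of `α` lies inside the disk of `(k c + r)/(N k)` whenever
`|k s - r m| ≤ m - k`; since `α ∈ S_N` that fraction cannot be reduced, so `k c + r` is not coprime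
to `N`. With `k ≤ 2` this rules out `c`, `c + 1` and `2 c + 1`, so the hypothesis makes `3 c + 1`
and `3 c + 2` coprime to `N`, and `k = 3` then forces `m ≤ 3`. For `m ≤ 3` the bound
`|a j - b m| < m` leaves only `b ∈ {c, c + 1, 2 c + 1}`, none of which is coprime to `N`,
contradicting that `β` is reduced.
-/

namespace Paper

noncomputable section

/-- Rationals `a/b ∈ [0,1]` in lowest terms with `N ∣ b`. -/
def cand (N : ℕ) : Set ℚ := {α | 0 ≤ α ∧ α ≤ 1 ∧ N ∣ α.den}

/-- The region `R_N`. -/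
def RN (N : ℕ) : Set ℂ := ⋃ α ∈ cand N, disk α

/-- The set `S_N`: those `α` whose disk is not covered by the other disks. -/
def SSet (N : ℕ) : Set ℚ :=
  {α | α ∈ cand N ∧ ¬ disk α ⊆ ⋃ β ∈ cand N \ {α}, disk β}

/-- The complexity `c(N)`: the maximum of the complexities of north poles of `α ∈ S_N`. -/
def cN (N : ℕ) : ℕ := sSup (poleComplexity (SSet N) '' SSet N)

lemma dist_ratCast (α β : ℚ) : dist (α : ℂ) β = |(α : ℝ) - β| := by
  rw [← Complex.ofReal_ratCast, ← Complex.ofReal_ratCast, Complex.dist_eq, ← Complex.ofReal_sub,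
    Complex.norm_real, Real.norm_eq_abs]

lemma ratCast_sub_ratCast (α β : ℚ) :
    (α : ℝ) - β = ((α.num * β.den - β.num * α.den : ℤ) : ℝ) / (α.den * β.den) := by
  rw [Rat.cast_def, Rat.cast_def]
  have := α.den_pos; have := β.den_pos
  field_simp
  push_cast
  ring

lemma disk_subset_disk {α β : ℚ} (h : |α.num * β.den - β.num * α.den| ≤ (α.den : ℤ) - β.den) :
    disk α ⊆ disk β := by
  apply Metric.closedBall_subset_closedBall'
  have ha : (0 : ℝ) < α.den := by exact_mod_cast α.den_pos
  have hb : (0 : ℝ) < β.den := by exact_mod_cast β.den_pos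
  have h' : |((α.num * β.den - β.num * α.den : ℤ) : ℝ)| ≤ α.den - β.den := by exact_mod_cast h
  rw [dist_ratCast, ratCast_sub_ratCast, abs_div, abs_of_pos (mul_pos ha hb),
    div_add_div _ _ ha.ne' (mul_pos ha hb).ne', div_le_div_iff₀ (by positivity) hb]
  nlinarith [mul_le_mul_of_nonneg_left h' (mul_pos ha hb).le]

lemma sq_add_sq_le_of_northPole_mem_disk {α β : ℚ} (h : northPole α ∈ disk β) :
    (α.num * β.den - β.num * α.den) ^ 2 + (β.den : ℤ) ^ 2 ≤ (α.den : ℤ) ^ 2 := by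
  have ha : (0 : ℝ) < α.den := by exact_mod_cast α.den_pos
  have hb : (0 : ℝ) < β.den := by exact_mod_cast β.den_pos
  have hpole : northPole α - β = (((α : ℝ) - β : ℝ) : ℂ) + ((1 / α.den : ℝ) : ℂ) * Complex.I := by
    simp only [northPole, div_eq_mul_inv, Complex.ofReal_sub, Complex.ofReal_ratCast, one_mul,
      Complex.ofReal_inv, Complex.ofReal_natCast]
    ring
  rw [disk, Metric.mem_closedBall, dist_eq_norm, hpole, Complex.norm_add_mul_I,
    Real.sqrt_le_left (by positivity), ratCast_sub_ratCast] at h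
  have h' :
      ((α.num * β.den - β.num * α.den : ℤ) : ℝ) ^ 2 + (β.den : ℝ) ^ 2 ≤ (α.den : ℝ) ^ 2 := by
    rw [div_pow, div_pow, div_pow, mul_pow, div_add_div _ _ (by positivity) (by positivity),
      div_le_div_iff₀ (by positivity) (by positivity)] at h
    refine le_of_mul_le_mul_right ?_ (by positivity : (0 : ℝ) < α.den ^ 2 * β.den ^ 2)
    linarith
  exact_mod_cast h'

lemma natCast_div_natCast_mem_cand {N p q : ℕ} (hq : 0 < q) (hNq : N ∣ q) (hpq : p ≤ q)
    (hcop : p.Coprime q) : (p / q : ℚ) ∈ cand N ∧ (p / q : ℚ).den = q ∧ (p / q : ℚ).num = p := by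
  have hcop' : (p : ℤ).natAbs.Coprime (q : ℤ).natAbs := hcop
  have hden : (p / q : ℚ).den = q := by
    simpa only [Int.cast_natCast, Nat.cast_inj] using
      Rat.den_div_eq_of_coprime (by exact_mod_cast hq) hcop'
  have hnum : (p / q : ℚ).num = p := by
    simpa only [Int.cast_natCast] using Rat.num_div_eq_of_coprime (by exact_mod_cast hq) hcop'
  have hle : (p / q : ℚ) ≤ 1 := div_le_one_of_le₀ (by exact_mod_cast hpq) (by positivity)
  exact ⟨⟨by positivity, hle, by rw [hden]; exact hNq⟩, hden, hnum⟩

lemma lt_of_num_eq_mul_add {N m c s : ℕ} {α : ℚ} (hα : α ∈ cand N) (hden : α.den = N * m)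
    (hnum : α.num = m * c + s) (hs : 0 < s) : c < N := by
  have hle := Rat.num_le_denom_iff.2 hα.2.1
  rw [hnum, hden] at hle
  have hle' : m * c + s ≤ m * N := by rw [mul_comm m N]; exact_mod_cast hle
  exact Nat.lt_of_mul_lt_mul_left (by omega : m * c < m * N)

lemma exists_num_eq_mul_add {N m : ℕ} {α : ℚ} (hα : α ∈ cand N) (hden : α.den = N * m)
    (hm : 2 ≤ m) : ∃ c s : ℕ, α.num = m * c + s ∧ 0 < s ∧ s < m ∧ s.Coprime m := by
  obtain ⟨a, ha⟩ := Int.eq_ofNat_of_zero_le (Rat.num_nonneg.2 hα.1)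
  have hcop : (a % m).Coprime m := by
    have := α.reduced
    rw [ha, Int.natAbs_natCast, hden] at this
    exact (ZMod.coprime_mod_iff_coprime a m).2 this.coprime_mul_left_right
  refine ⟨a / m, a % m, by rw [ha]; exact_mod_cast (Nat.div_add_mod a m).symm,
    Nat.pos_of_ne_zero fun h0 => ?_, Nat.mod_lt _ (by omega), hcop⟩
  rw [h0, Nat.coprime_zero_left] at hcop
  omega

lemma not_coprime_of_mem_SSet {N m c s k r : ℕ} {α : ℚ} (hα : α ∈ SSet N)
    (hden : α.den = N * m) (hnum : α.num = m * c + s) (hs : 0 < s) (hk : 0 < k) (hkm : k < m)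
    (hrk : r ≤ k) (hr : r.Coprime k) (hcover : |(k * s - r * m : ℤ)| ≤ m - k) :
    ¬ N.Coprime (k * c + r) := by
  intro hNp
  have hN : 0 < N := Nat.pos_of_mul_pos_right (hden ▸ α.den_pos)
  have hc := lt_of_num_eq_mul_add hα.1 hden hnum hs
  have hcop : (k * c + r).Coprime (N * k) :=
    Nat.Coprime.mul_right hNp.symm ((Nat.coprime_mul_left_add_left r k c).2 hr)
  obtain ⟨hβ, hβden, hβnum⟩ := natCast_div_natCast_mem_cand (Nat.mul_pos hN hk)
    (dvd_mul_right N k) (by nlinarith) hcop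
  have hne : ((k * c + r : ℕ) / (N * k : ℕ) : ℚ) ≠ α := by
    intro heq
    have := congrArg Rat.den heq
    rw [hβden, hden] at this
    exact absurd (Nat.eq_of_mul_eq_mul_left hN this) hkm.ne
  refine hα.2 ((disk_subset_disk ?_).trans (Set.subset_biUnion_of_mem (u := disk) ⟨hβ, hne⟩))
  rw [hβden, hβnum, hnum, hden]
  have hdiff : ((m * c + s : ℕ) : ℤ) * (N * k : ℕ) - (k * c + r : ℕ) * (N * m : ℕ)
      = N * (k * s - r * m) := by push_cast; ring
  push_cast at hdiff ⊢
  rw [hdiff, abs_mul, Nat.abs_cast]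
  nlinarith

lemma not_coprime_of_mem_SSet_of_two_le {N m c s : ℕ} {α : ℚ} (hα : α ∈ SSet N)
    (hden : α.den = N * m) (hnum : α.num = m * c + s) (hs : 0 < s) (hsm : s < m) (hm : 2 ≤ m) :
    ¬ N.Coprime c ∧ ¬ N.Coprime (c + 1) ∧ (3 ≤ m → ¬ N.Coprime (2 * c + 1)) := by
  refine ⟨?_, ?_, fun hm3 => ?_⟩
  · simpa using not_coprime_of_mem_SSet hα hden hnum hs (k := 1) (r := 0) one_pos (by omega)
      (Nat.zero_le _) (by norm_num) (by rw [abs_le]; push_cast; omega)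
  · simpa using not_coprime_of_mem_SSet hα hden hnum hs (k := 1) (r := 1) one_pos (by omega)
      le_rfl (by norm_num) (by rw [abs_le]; push_cast; omega)
  · exact not_coprime_of_mem_SSet hα hden hnum hs (k := 2) (r := 1) two_pos (by omega)
      (by norm_num) (by norm_num) (by rw [abs_le]; push_cast; omega)

lemma and_of_two_le_length_filter {ι : Type*} {p : ι → Prop} [DecidablePred p]
    {x₁ x₂ x₃ x₄ x₅ : ι} (h : 2 ≤ ([x₁, x₂, x₃, x₄, x₅].filter fun x => p x).length)
    (h₁ : ¬ p x₁) (h₂ : ¬ p x₂) (h₃ : ¬ p x₃) : p x₄ ∧ p x₅ := by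
  by_cases h₄ : p x₄ <;> by_cases h₅ : p x₅ <;> simp_all

def TwoOfFiveCoprime (N : ℕ) : Prop :=
  ∀ n, n ≤ N - 1 →
    2 ≤ (([n, n + 1, 2 * n + 1, 3 * n + 1, 3 * n + 2].filter (fun m => Nat.gcd N m = 1)).length)

lemma le_three_of_mem_SSet {N m c s : ℕ} {α : ℚ}
    (h : TwoOfFiveCoprime N) (hα : α ∈ SSet N) (hden : α.den = N * m)
    (hnum : α.num = m * c + s) (hs : 0 < s) (hsm : s < m) (hcop : s.Coprime m) : m ≤ 3 := by
  by_contra! hm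
  have hc := lt_of_num_eq_mul_add hα.1 hden hnum hs
  obtain ⟨h₁, h₂, h₃⟩ := not_coprime_of_mem_SSet_of_two_le hα hden hnum hs hsm (by omega)
  obtain ⟨h₄, h₅⟩ := and_of_two_le_length_filter (h c (by omega)) h₁ h₂ (h₃ (by omega))
  rcases le_or_gt (3 * s + 3) (2 * m) with hsmall | hlarge
  · exact not_coprime_of_mem_SSet hα hden hnum hs (k := 3) (r := 1) three_pos hm
      (by norm_num) (by norm_num) (by rw [abs_le]; push_cast; omega) h₄
  · have hms : m + 3 ≤ 3 * s := by
      by_contra!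
      obtain rfl : m = 4 := by omega
      obtain rfl : s = 2 := by omega
      exact absurd hcop (by decide)
    exact not_coprime_of_mem_SSet hα hden hnum hs (k := 3) (r := 2) three_pos hm
      (by norm_num) (by norm_num) (by rw [abs_le]; push_cast; omega) h₅

lemma num_eq_of_abs_lt {m j c s b : ℕ} (hm : m ≤ 3) (hj : 0 < j) (hjm : j < m) (hs : 0 < s)
    (hsm : s < m) (hb : j = 2 → ¬ 2 ∣ b) (hu : |((m * c + s) * j - b * m : ℤ)| < m) :
    b = c ∨ b = c + 1 ∨ (m = 3 ∧ b = 2 * c + 1) := by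
  rw [abs_lt] at hu
  interval_cases m <;> interval_cases j <;> omega

lemma lt_and_abs_lt_of_northPole_mem_disk {N m j : ℕ} {α β : ℚ} (hpole : northPole α ∈ disk β)
    (hne : β ≠ α) (hm : α.den = N * m) (hj : β.den = N * j) :
    j < m ∧ |α.num * j - β.num * m| < m := by
  have hN : 0 < N := Nat.pos_of_mul_pos_right (hm ▸ α.den_pos)
  have hj0 : (0 : ℤ) < j := by exact_mod_cast Nat.pos_of_mul_pos_left (hj ▸ β.den_pos)
  set u : ℤ := α.num * j - β.num * m
  have hcross : α.num * β.den - β.num * α.den = N * u := by rw [hj, hm]; push_cast; ring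
  have hu0 : u ≠ 0 := by
    have := sub_ne_zero.2 (mt Rat.eq_iff_mul_eq_mul.2 hne.symm)
    rw [hcross] at this
    exact right_ne_zero_of_mul this
  have hkey : u ^ 2 + j ^ 2 ≤ m ^ 2 := by
    have := sq_add_sq_le_of_northPole_mem_disk hpole
    rw [hcross, hj, hm] at this
    push_cast at this
    have hN2 : (0 : ℤ) < N ^ 2 := by positivity
    nlinarith
  refine ⟨?_, abs_lt_of_sq_lt_sq (by nlinarith) (by positivity)⟩
  have : (j : ℤ) ^ 2 < m ^ 2 := by nlinarith [sq_pos_of_ne_zero hu0]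
  exact_mod_cast abs_lt_of_sq_lt_sq this (by positivity)

lemma northPole_not_mem_disk {N : ℕ} (h : TwoOfFiveCoprime N) {α β : ℚ} (hα : α ∈ SSet N)
    (hβ : β ∈ SSet N) (hne : β ≠ α) : northPole α ∉ disk β := by
  intro hpole
  obtain ⟨m, hm⟩ := hα.1.2.2
  obtain ⟨j, hj⟩ := hβ.1.2.2
  obtain ⟨b, hb⟩ := Int.eq_ofNat_of_zero_le (Rat.num_nonneg.2 hβ.1.1)
  have hbcop : b.Coprime (N * j) := by
    simpa only [hb, Int.natAbs_natCast, hj] using β.reduced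
  have hj0 : 0 < j := Nat.pos_of_mul_pos_left (hj ▸ β.den_pos)
  obtain ⟨hjm, hum⟩ := lt_and_abs_lt_of_northPole_mem_disk hpole hne hm hj
  obtain ⟨c, s, hnum, hs, hsm, hcop⟩ := exists_num_eq_mul_add hα.1 hm (by omega)
  have hb2 : j = 2 → ¬ 2 ∣ b := by
    rintro rfl
    exact Nat.prime_two.coprime_iff_not_dvd.1 (hbcop.coprime_dvd_right (dvd_mul_left 2 N)).symm
  rw [hnum, hb] at hum
  obtain ⟨h₁, h₂, h₃⟩ := not_coprime_of_mem_SSet_of_two_le hα hm hnum hs hsm (by omega)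
  have hNb : N.Coprime b := (hbcop.coprime_dvd_right (dvd_mul_right N j)).symm
  rcases num_eq_of_abs_lt (le_three_of_mem_SSet h hα hm hnum hs hsm hcop) hj0 hjm hs hsm hb2 hum
    with rfl | rfl | ⟨rfl, rfl⟩
  · exact h₁ hNb
  · exact h₂ hNb
  · exact h₃ le_rfl hNb

lemma poleComplexity_SSet_eq_zero {N : ℕ} (h : TwoOfFiveCoprime N) {α : ℚ} (hα : α ∈ SSet N) :
    poleComplexity (SSet N) α = 0 := by
  have hempty : {β ∈ SSet N | β ≠ α ∧ northPole α ∈ disk β} = ∅ :=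
    Set.eq_empty_of_forall_notMem fun β ⟨hβ, hne, hpole⟩ =>
      northPole_not_mem_disk h hα hβ hne hpole
  rw [poleComplexity, hempty, Set.ncard_empty]

theorem cN_eq_zero_of_two_coprime_general (N : ℕ)
    (h : ∀ n, n ≤ N - 1 →
      2 ≤ (([n, n + 1, 2 * n + 1, 3 * n + 1, 3 * n + 2].filter
        (fun m => Nat.gcd N m = 1)).length)) :
    cN N = 0 :=
  Nat.le_zero.mp <| csSup_le' <| Set.forall_mem_image.2 fun _ hα =>
    (poleComplexity_SSet_eq_zero h hα).le

/-- If for every `0 ≤ n ≤ N-1` at least two of `n`, `n+1`, `2n+1`, `3n+1`, `3n+2`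
are coprime to `N`, then `c(N) = 0`. -/
theorem cN_eq_zero_of_two_coprime (N : ℕ) (hN : 1 < N)
    (h : ∀ n, n ≤ N - 1 →
      2 ≤ (([n, n + 1, 2 * n + 1, 3 * n + 1, 3 * n + 2].filter
        (fun m => Nat.gcd N m = 1)).length)) :
    cN N = 0 :=
  cN_eq_zero_of_two_coprime_general N h

end

end Paper
end
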